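/- arXiv:1402.1908 — 5 statements merged into one kernel-verified Lean document; each statement's English description precedes it below -/
import Mathlib

section
/- The function h(w) = w^δ exp(−κ w^{−γ}) for w > 0, with parameters γ > 0, δ ∈ ℝ, κ > 0, is Γ-varying at 0 with auxiliary function f(w) = w^{1+γ}/(κγ); i.e., for every z ∈ ℝ, lim_{s→0⁺} h(s + z f(s))/h(s) = e^z. -/
open Real Set Filter Topology

/-!
With `a = z / (κγ)` the shifted point is `s + z f(s) = s (1 + a s^γ)`, so the ratio equals
`(1 + a s^γ)^δ · exp (-κ ((1 + a s^γ)^(-γ) - 1) / s^γ)`. As `s → 0⁺`, `t = s^γ → 0⁺`, and the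
exponent is `-κ` times the difference quotient at `0` of `t ↦ (1 + a t)^(-γ)`, which tends to
`-κ · (-γ a) = z`.
-/

theorem tendsto_rpow_nhdsGT_zero_nhdsGT {γ : ℝ} (hγ : 0 < γ) :
    Tendsto (fun s : ℝ => s ^ γ) (𝓝[>] 0) (𝓝[>] 0) :=
  tendsto_nhdsWithin_iff.mpr
    ⟨tendsto_nhdsWithin_of_tendsto_nhds tendsto_id |>.rpow_const_nhds_zero hγ,
      eventually_mem_nhdsWithin.mono fun _ hs => rpow_pos_of_pos hs γ⟩

theorem tendsto_one_add_mul_rpow_nhdsGT_zero {γ : ℝ} (hγ : 0 < γ) (a : ℝ) :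
    Tendsto (fun s : ℝ => 1 + a * s ^ γ) (𝓝[>] 0) (𝓝 1) := by
  simpa using
    ((tendsto_rpow_nhdsGT_zero_nhdsGT hγ).mono_right nhdsWithin_le_nhds).const_mul a |>.const_add 1

theorem tendsto_one_add_mul_rpow_sub_one_div (a p : ℝ) :
    Tendsto (fun t : ℝ => ((1 + a * t) ^ p - 1) / t) (𝓝[≠] 0) (𝓝 (p * a)) := by
  have hderiv : HasDerivAt (fun t : ℝ => (1 + a * t) ^ p) (p * a) 0 := by
    simpa [mul_comm a p] using (((hasDerivAt_id (0 : ℝ)).const_mul a).const_add 1).rpow_const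
      (p := p) (Or.inl (by simp))
  refine (hasDerivAt_iff_tendsto_slope_zero.mp hderiv).congr fun t => ?_
  simp [div_eq_inv_mul]

theorem rpow_mul_exp_neg_rpow_ratio {s B : ℝ} (hs : 0 < s) (hB : 0 < B) (γ δ κ : ℝ) :
    (s * B) ^ δ * exp (-κ * (s * B) ^ (-γ)) / (s ^ δ * exp (-κ * s ^ (-γ))) =
      B ^ δ * exp (-κ * ((B ^ (-γ) - 1) / s ^ γ)) := by
  have hexponent : -κ * ((B ^ (-γ) - 1) / s ^ γ) =
      -κ * ((s ^ γ)⁻¹ * B ^ (-γ)) - -κ * (s ^ γ)⁻¹ := by ring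
  have := (rpow_pos_of_pos hs δ).ne'
  rw [mul_rpow hs.le hB.le, mul_rpow hs.le hB.le, rpow_neg hs.le, hexponent, exp_sub]
  field_simp

theorem tendsto_one_add_mul_rpow_mul_exp {γ : ℝ} (hγ : 0 < γ) (a δ κ : ℝ) :
    Tendsto
      (fun s : ℝ => (1 + a * s ^ γ) ^ δ * exp (-κ * (((1 + a * s ^ γ) ^ (-γ) - 1) / s ^ γ)))
      (𝓝[>] 0) (𝓝 (exp (κ * γ * a))) := by
  have hexponent : Tendsto (fun s : ℝ => -κ * (((1 + a * s ^ γ) ^ (-γ) - 1) / s ^ γ))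
      (𝓝[>] 0) (𝓝 (κ * γ * a)) := by
    have := ((tendsto_one_add_mul_rpow_sub_one_div a (-γ)).comp
      ((tendsto_rpow_nhdsGT_zero_nhdsGT hγ).mono_right
        (nhdsWithin_mono 0 fun _ h => ne_of_gt h))).const_mul (-κ)
    rwa [show -κ * (-γ * a) = κ * γ * a by ring] at this
  simpa using
    ((tendsto_one_add_mul_rpow_nhdsGT_zero hγ a).rpow_const (Or.inl one_ne_zero)).mul
      hexponent.rexp

/-- `h(w) = w^δ exp(−κ w^{−γ})` is Γ-varying at 0 with auxiliary
function `f(w) = w^{1+γ}/(κγ)`. -/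
theorem gamma_varying_example
    (γ δ κ : ℝ) (hγ : 0 < γ) (hκ : 0 < κ)
    (h f : ℝ → ℝ)
    (hh : ∀ w > (0:ℝ), h w = w ^ δ * Real.exp (-κ * w ^ (-γ)))
    (hf : ∀ w > (0:ℝ), f w = w ^ (1 + γ) / (κ * γ)) :
    ∀ z : ℝ, Tendsto (fun s => h (s + z * f s) / h s)
      (nhdsWithin 0 (Set.Ioi 0)) (nhds (Real.exp z)) := by
  intro z
  set a := z / (κ * γ)
  have hz : κ * γ * a = z := mul_div_cancel₀ z (mul_pos hκ hγ).ne'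
  have hlim := tendsto_one_add_mul_rpow_mul_exp hγ a δ κ
  rw [hz] at hlim
  refine hlim.congr' ?_
  filter_upwards [self_mem_nhdsWithin,
    (tendsto_one_add_mul_rpow_nhdsGT_zero hγ a).eventually (eventually_gt_nhds one_pos)]
    with s (hs : 0 < s) hB
  have hshift : s + z * f s = s * (1 + a * s ^ γ) := by
    rw [hf s hs, rpow_add hs, rpow_one, ← hz]
    field_simp
  rw [hshift, hh _ (mul_pos hs hB), hh s hs, rpow_mul_exp_neg_rpow_ratio hs hB]
end

section
/- The function h(w) = C w^{−3/2} exp{−(log w)²/(2λ²)} on (0,1), where C = exp(−λ²/8)/(λ√(2π)) and λ > 0, is Γ-varying at 0 with auxiliary function f(w) = −λ² w / log w; i.e., for all z ∈ ℝ, lim_{s→0⁺} h(s + z f(s))/h(s) = e^z. -/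
open Real Set Filter Topology

/-! Put `ε = -λ² / log s`, which tends to `0⁺` as `s → 0⁺`. Then `s + z f(s) = s (1 + ε z)`, and
since `log s = -λ² / ε` the Gaussian factor in `log w` gives
`h(s (1 + ε z)) / h(s) = (1 + ε z)^(-3/2) exp(log(1 + ε z) / ε - log(1 + ε z)² / (2λ²))`,
which tends to `e^z` because `log(1 + ε z) / ε → z`. -/

def IsGammaVaryingAtZero (h f : ℝ → ℝ) : Prop :=
  ∀ z : ℝ, Tendsto (fun s => h (s + z * f s) / h s) (𝓝[>] 0) (𝓝 (exp z))

noncomputable def lognormalKernel (C a σ w : ℝ) : ℝ :=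
  C * w ^ a * exp (-log w ^ 2 / (2 * σ ^ 2))

lemma tendsto_log_one_add_mul_div (z : ℝ) :
    Tendsto (fun ε => log (1 + ε * z) / ε) (𝓝[≠] 0) (𝓝 z) := by
  have hderiv : HasDerivAt (fun ε => log (1 + ε * z)) z 0 := by
    simpa using (((hasDerivAt_id (0 : ℝ)).mul_const z).const_add 1).log (by simp)
  refine (hasDerivAt_iff_tendsto_slope.mp hderiv).congr fun ε => ?_
  simp [slope_def_field]

lemma tendsto_div_log_nhdsGT_zero (c : ℝ) : Tendsto (fun s => c / log s) (𝓝[>] 0) (𝓝 0) :=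
  tendsto_const_nhds.div_atBot tendsto_log_nhdsGT_zero

lemma tendsto_div_log_nhdsGT_zero_nhdsNE {c : ℝ} (hc : c ≠ 0) :
    Tendsto (fun s => c / log s) (𝓝[>] 0) (𝓝[≠] 0) := by
  refine tendsto_nhdsWithin_iff.mpr ⟨tendsto_div_log_nhdsGT_zero c, ?_⟩
  filter_upwards [Ioo_mem_nhdsGT one_pos] with s hs
  exact div_ne_zero hc (log_neg hs.1 hs.2).ne

lemma tendsto_add_mul_div_log_nhdsGT_zero (c z : ℝ) :
    Tendsto (fun s => s + z * (c * s / log s)) (𝓝[>] 0) (𝓝[>] 0) := by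
  have hfactor : Tendsto (fun s => 1 + c / log s * z) (𝓝[>] 0) (𝓝 1) := by
    simpa using ((tendsto_div_log_nhdsGT_zero c).mul_const z).const_add 1
  have hprod := (tendsto_nhdsWithin_of_tendsto_nhds tendsto_id).mul hfactor
  rw [zero_mul] at hprod
  refine tendsto_nhdsWithin_iff.mpr ⟨hprod.congr fun s => by rw [id]; ring, ?_⟩
  filter_upwards [self_mem_nhdsWithin, hfactor.eventually (lt_mem_nhds one_pos)] with s hs hpos
  rw [mem_Ioi, show s + z * (c * s / log s) = s * (1 + c / log s * z) by ring]
  exact mul_pos hs hpos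

lemma lognormalKernel_mul_div {C a σ s u : ℝ} (hC : C ≠ 0) (hs : 0 < s) (hu : 0 < u) :
    lognormalKernel C a σ (s * u) / lognormalKernel C a σ s =
      u ^ a * exp (-(log u * (2 * log s + log u)) / (2 * σ ^ 2)) := by
  have hexp : -(log s + log u) ^ 2 / (2 * σ ^ 2) =
      -log s ^ 2 / (2 * σ ^ 2) + -(log u * (2 * log s + log u)) / (2 * σ ^ 2) := by ring
  unfold lognormalKernel
  rw [mul_rpow hs.le hu.le, log_mul hs.ne' hu.ne', hexp, exp_add]
  field_simp [(rpow_pos_of_pos hs a).ne', (exp_pos _).ne']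

theorem lognormalKernel_isGammaVaryingAtZero {C σ : ℝ} (hC : C ≠ 0) (hσ : σ ≠ 0) (a : ℝ) :
    IsGammaVaryingAtZero (lognormalKernel C a σ) (fun w => -σ ^ 2 * w / log w) := by
  intro z
  set G : ℝ → ℝ := fun ε =>
    (1 + ε * z) ^ a * exp (log (1 + ε * z) / ε - log (1 + ε * z) ^ 2 / (2 * σ ^ 2))
  have hbase : Tendsto (fun ε => 1 + ε * z) (𝓝[≠] 0) (𝓝 1) :=
    tendsto_nhdsWithin_of_tendsto_nhds <| by
      simpa using ((tendsto_id (x := 𝓝 (0 : ℝ))).mul_const z).const_add 1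
  have hG : Tendsto G (𝓝[≠] 0) (𝓝 (exp z)) := by
    have hpow := hbase.rpow_const (p := a) (Or.inl one_ne_zero)
    have hexponent := (tendsto_log_one_add_mul_div z).sub
      (((hbase.log one_ne_zero).pow 2).div_const (2 * σ ^ 2))
    simpa using hpow.mul hexponent.rexp
  have hε := tendsto_div_log_nhdsGT_zero_nhdsNE (neg_ne_zero.mpr (pow_ne_zero 2 hσ))
  refine (hG.comp hε).congr' ?_
  filter_upwards [Ioo_mem_nhdsGT one_pos, hε.eventually (hbase.eventually (lt_mem_nhds one_pos))]
    with s hs hpos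
  have hlog_ne : log s ≠ 0 := (log_neg hs.1 hs.2).ne
  have hpoint : s + z * (-σ ^ 2 * s / log s) = s * (1 + -σ ^ 2 / log s * z) := by ring
  have hexponent (L : ℝ) :
      L / (-σ ^ 2 / log s) - L ^ 2 / (2 * σ ^ 2) = -(L * (2 * log s + L)) / (2 * σ ^ 2) := by
    field_simp
    ring
  rw [Function.comp_apply, hpoint, lognormalKernel_mul_div hC hs.1 hpos, ← hexponent]

/-- The Smith (Hüsler–Reiss) spectral density tail
`h(w) = C w^{−3/2} exp{−(log w)²/(2λ²)}` with
`C = exp(−λ²/8)/(λ√(2π))` is Γ-varying at 0 with auxiliary function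
`f(w) = −λ² w / log w`. -/
theorem smith_spectral_density_gamma_varying
    (lam : ℝ) (hlam : 0 < lam)
    (h f : ℝ → ℝ)
    (hh : ∀ w ∈ Set.Ioo (0:ℝ) 1,
      h w = Real.exp (-lam ^ 2 / 8) / (lam * Real.sqrt (2 * Real.pi))
              * w ^ (-(3:ℝ)/2) * Real.exp (-(Real.log w) ^ 2 / (2 * lam ^ 2)))
    (hf : ∀ w ∈ Set.Ioo (0:ℝ) 1, f w = -lam ^ 2 * w / Real.log w) :
    ∀ z : ℝ, Tendsto (fun s => h (s + z * f s) / h s)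
      (nhdsWithin 0 (Set.Ioi 0)) (nhds (Real.exp z)) := by
  intro z
  have hC : Real.exp (-lam ^ 2 / 8) / (lam * Real.sqrt (2 * Real.pi)) ≠ 0 := by positivity
  refine (lognormalKernel_isGammaVaryingAtZero hC hlam.ne' (-(3:ℝ)/2) z).congr' ?_
  have hIoo : ∀ᶠ w in 𝓝[>] (0:ℝ), w ∈ Ioo 0 1 := Ioo_mem_nhdsGT one_pos
  filter_upwards [hIoo, (tendsto_add_mul_div_log_nhdsGT_zero (-lam ^ 2) z).eventually hIoo]
    with s hs hshift
  rw [hf s hs, hh _ hshift, hh s hs]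
  rfl
end

section
/- Let V(x,y) = (1/2)(1/x + 1/y)[1 + {1 − 2(1+ρ)xy/(x+y)²}^{1/2}] be the Schlather exponent measure with ρ ∈ (−1,1). Then the spectral measure mass at 0, given by H({0}) = −y² lim_{x→0⁺} ∂V(x,y)/∂y, equals (1−ρ)/2. -/
/-!
Clearing the denominator `(x + t)²` under the square root gives, for `x, t > 0`,
`V(x,t) = (x + t + √(x² + t² − 2ρxt)) / (2xt)`, whose `t`-derivative is
`(ρt − x) / (2t²√(x² + t² − 2ρxt)) − 1 / (2t²)`. This expression is continuous in `x` at `0`,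
where the radicand is `y² > 0`, so `−y² ∂V/∂y (x,y) → 1/2 − ρ/2` as `x → 0⁺`.
-/

open Real Set Filter Topology

theorem schlather_eq_div {x t : ℝ} (ρ : ℝ) (hx : 0 < x) (ht : 0 < t) :
    1 / 2 * (1 / x + 1 / t) * (1 + √(1 - 2 * (1 + ρ) * x * t / (x + t) ^ 2))
      = (x + t + √(x ^ 2 + t ^ 2 - 2 * ρ * x * t)) / (2 * x * t) := by
  have hxt : 0 < x + t := add_pos hx ht
  have hrad : 1 - 2 * (1 + ρ) * x * t / (x + t) ^ 2
      = (x ^ 2 + t ^ 2 - 2 * ρ * x * t) / (x + t) ^ 2 := by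
    field_simp
    ring
  rw [hrad, sqrt_div' _ (by positivity), sqrt_sq hxt.le]
  field_simp
  ring

theorem hasDerivAt_schlather_div {ρ x y : ℝ} (hx : x ≠ 0) (hy : y ≠ 0)
    (hq : 0 < x ^ 2 + y ^ 2 - 2 * ρ * x * y) :
    HasDerivAt (fun t => (x + t + √(x ^ 2 + t ^ 2 - 2 * ρ * x * t)) / (2 * x * t))
      ((ρ * y - x) / (2 * y ^ 2 * √(x ^ 2 + y ^ 2 - 2 * ρ * x * y)) - 1 / (2 * y ^ 2)) y := by
  have hrad : HasDerivAt (fun t => x ^ 2 + t ^ 2 - 2 * ρ * x * t) (2 * y - 2 * ρ * x) y := by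
    simpa using
      ((hasDerivAt_pow 2 y).const_add (x ^ 2)).fun_sub ((hasDerivAt_id y).const_mul (2 * ρ * x))
  have hnum : HasDerivAt (fun t => x + t + √(x ^ 2 + t ^ 2 - 2 * ρ * x * t))
      (1 + (2 * y - 2 * ρ * x) / (2 * √(x ^ 2 + y ^ 2 - 2 * ρ * x * y))) y :=
    ((hasDerivAt_id' y).const_add x).fun_add (hrad.sqrt hq.ne')
  have hden : HasDerivAt (fun t => 2 * x * t) (2 * x) y := by
    simpa using (hasDerivAt_id y).const_mul (2 * x)
  refine (hnum.fun_div hden (by simp [hx, hy])).congr_deriv ?_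
  have hsq := sq_sqrt hq.le
  generalize √(x ^ 2 + y ^ 2 - 2 * ρ * x * y) = s at hsq ⊢
  have hs : s ≠ 0 := by
    rintro rfl
    linarith [zero_pow two_ne_zero (M₀ := ℝ)]
  field_simp
  linear_combination -hsq

theorem schlather_mass_at_zero_general
    (ρ : ℝ)
    (V : ℝ → ℝ → ℝ)
    (hV : ∀ x > (0:ℝ), ∀ y > (0:ℝ),
      V x y = (1/2) * (1/x + 1/y)
        * (1 + Real.sqrt (1 - 2 * (1 + ρ) * x * y / (x + y) ^ 2))) :
    ∀ y > (0:ℝ),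
      Tendsto (fun x => -(y ^ 2) * deriv (fun t => V x t) y)
        (nhdsWithin 0 (Set.Ioi 0)) (nhds ((1 - ρ) / 2)) := by
  intro y hy
  set D : ℝ → ℝ := fun x =>
    (ρ * y - x) / (2 * y ^ 2 * √(x ^ 2 + y ^ 2 - 2 * ρ * x * y)) - 1 / (2 * y ^ 2)
  have hq : ∀ᶠ x in 𝓝 0, 0 < x ^ 2 + y ^ 2 - 2 * ρ * x * y :=
    (Continuous.tendsto (by fun_prop) 0).eventually_const_lt (by simpa using pow_pos hy 2)
  have hderiv : ∀ᶠ x in 𝓝[>] 0, deriv (fun t => V x t) y = D x := by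
    filter_upwards [self_mem_nhdsWithin, nhdsWithin_le_nhds hq] with x (hx : 0 < x) hqx
    have hVx : (fun t => (x + t + √(x ^ 2 + t ^ 2 - 2 * ρ * x * t)) / (2 * x * t))
        =ᶠ[𝓝 y] fun t => V x t := by
      filter_upwards [Ioi_mem_nhds hy] with t (ht : 0 < t)
      rw [hV x hx t ht, schlather_eq_div ρ hx ht]
    exact ((hasDerivAt_schlather_div hx.ne' hy.ne' hqx).congr_of_eventuallyEq hVx.symm).deriv
  have hrad0 : √((0:ℝ) ^ 2 + y ^ 2 - 2 * ρ * 0 * y) = y := by simp [sqrt_sq hy.le]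
  have hD : ContinuousAt D 0 :=
    (ContinuousAt.div (by fun_prop) (by fun_prop) (by rw [hrad0]; positivity)).sub
      continuousAt_const
  have hD0 : -(y ^ 2) * D 0 = (1 - ρ) / 2 := by
    simp only [D, hrad0]
    field_simp
    ring
  refine Tendsto.congr' (hderiv.mono fun x hx => congrArg _ hx.symm) ?_
  rw [← hD0]
  exact tendsto_nhdsWithin_of_tendsto_nhds (continuousAt_const.mul hD).tendsto

/-- For the Schlather exponent measure
`V(x,y) = (1/2)(1/x + 1/y)[1 + √(1 − 2(1+ρ)xy/(x+y)²)]` with `ρ ∈ (−1,1)`,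
the spectral-measure mass at 0, `H({0}) = −y² lim_{x→0⁺} ∂V(x,y)/∂y`,
equals `(1−ρ)/2`. -/
theorem schlather_mass_at_zero
    (ρ : ℝ) (hρ : ρ ∈ Set.Ioo (-1:ℝ) 1)
    (V : ℝ → ℝ → ℝ)
    (hV : ∀ x > (0:ℝ), ∀ y > (0:ℝ),
      V x y = (1/2) * (1/x + 1/y)
        * (1 + Real.sqrt (1 - 2 * (1 + ρ) * x * y / (x + y) ^ 2))) :
    ∀ y > (0:ℝ),
      Tendsto (fun x => -(y ^ 2) * deriv (fun t => V x t) y)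
        (nhdsWithin 0 (Set.Ioi 0)) (nhds ((1 - ρ) / 2)) :=
  schlather_mass_at_zero_general ρ V hV
end

section
/- Consider W(x,z) := −(x/(κγ)²)(y/x)^{δ+2(1+γ)} exp{−κ(y/x)^{−γ}} with y = a(x)+b(x)z, a(x) = x κ^{1/γ}(log x)^{−1/γ}[1 + γ^{−2}{δ+2(1+γ)}(log log x)/(log x)], b(x) = x(log x)^{−1−1/γ}. Then for each fixed z ∈ ℝ, lim_{x→∞} W(x,z) = −{κ^{(δ+2)/γ}/γ²} exp(γ κ^{−1/γ} z), so 1 − exp{W(x,z)} converges to G(z) = 1 − exp[−{κ^{(δ+2)/γ}/γ²} exp(γκ^{−1/γ}z)], a nondegenerate distribution function in z. -/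
open Real Set Filter Topology Asymptotics

/-! With `L = log x`, `p = δ + 2(1 + γ)` and `ε = (p γ⁻² log L + κ^{-1/γ} z) / L`, one has
`y / x = κ^{1/γ} L^{-1/γ} (1 + ε)`. Expanding `(1 + ε)^{-γ} = 1 - γε + R(ε)`, the term `γ L ε`
in the exponent produces exactly `L^{p/γ} e^{γ κ^{-1/γ} z}`, which cancels the factor `L^{-p/γ}`
of `(y / x)^p`, so that
`W = -(κ^{(δ+2)/γ} / γ²) e^{γ κ^{-1/γ} z} (1 + ε)^p exp(-L R(ε))`.
Since `R(ε) = O(ε²)` and `L ε² = (p γ⁻² log L + κ^{-1/γ} z)² / L → 0`, the last two factors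
tend to `1`. -/

/-- The `O`-analogue of `Convex.isLittleO_pow_succ_real`. -/
theorem Convex.isBigO_pow_succ_real {E : Type*} [NormedAddCommGroup E] [NormedSpace ℝ E]
    {f f' : ℝ → E} {x₀ : ℝ} {n : ℕ} {s : Set ℝ} (hs : Convex ℝ s) (hx₀s : x₀ ∈ s)
    (hff' : ∀ x ∈ s, HasDerivWithinAt f (f' x) s x) (hf' : f' =O[𝓝[s] x₀] fun x ↦ (x - x₀) ^ n) :
    (fun x ↦ f x - f x₀) =O[𝓝[s] x₀] fun x ↦ (x - x₀) ^ (n + 1) := by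
  obtain ⟨c, hc0, hc⟩ := hf'.exists_nonneg
  refine .of_bound c ?_
  have : ∀ᶠ x in 𝓝[s] x₀, segment ℝ x₀ x ⊆ s ∧
      ∀ y ∈ segment ℝ x₀ x, ‖f' y‖ ≤ c * ‖x - x₀‖ ^ n := by
    filter_upwards [self_mem_nhdsWithin, hs.eventually_nhdsWithin_segment hx₀s hc.bound]
      with x hxs h
    refine ⟨hs.segment_subset hx₀s hxs, fun y hy ↦ (h y hy).trans ?_⟩
    rw [norm_pow]
    gcongr
    exact norm_sub_le_of_mem_segment hy
  filter_upwards [this] with x ⟨hseg, h⟩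
  have := (convex_segment x₀ x).norm_image_sub_le_of_norm_hasDerivWithin_le
    (fun y hy ↦ (hff' y (hseg hy)).mono hseg) h (left_mem_segment ℝ x₀ x)
    (right_mem_segment ℝ x₀ x)
  rwa [norm_pow, pow_succ, ← mul_assoc]

theorem isBigO_one_add_rpow_sub_one_sub_mul (r : ℝ) :
    (fun ε : ℝ ↦ (1 + ε) ^ r - 1 - r * ε) =O[𝓝 0] fun ε ↦ ε ^ 2 := by
  have hs : 𝓝[Ioi (-1)] (0 : ℝ) = 𝓝 0 := nhdsWithin_eq_nhds.2 (Ioi_mem_nhds (by norm_num))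
  have hderiv (ε : ℝ) (hε : ε ∈ Ioi (-1)) : HasDerivAt (fun ε : ℝ ↦ (1 + ε) ^ r - r * ε)
      (r * (1 + ε) ^ (r - 1) - r) ε := by
    have h1 : (1 + ε) ≠ 0 := by simp only [mem_Ioi] at hε; linarith
    simpa using (((hasDerivAt_id ε).const_add 1).rpow_const (p := r) (Or.inl h1)).fun_sub
      ((hasDerivAt_id ε).const_mul r)
  have hderiv' : HasDerivAt (fun ε : ℝ ↦ (1 + ε) ^ (r - 1)) (r - 1) 0 := by
    simpa using ((hasDerivAt_id (0 : ℝ)).const_add 1).rpow_const (p := r - 1) (Or.inl (by norm_num))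
  have hf' : (fun ε : ℝ ↦ r * (1 + ε) ^ (r - 1) - r) =O[𝓝 0] fun ε ↦ (ε - 0) ^ 1 := by
    simpa [mul_sub] using (hderiv'.isBigO_sub.const_mul_left r)
  have := (convex_Ioi (-1 : ℝ)).isBigO_pow_succ_real (by norm_num)
    (fun ε hε ↦ (hderiv ε hε).hasDerivWithinAt) (hs ▸ hf')
  rw [hs] at this
  simpa [sub_sub, add_comm] using this

theorem isLittleO_const_mul_log_add_pow_id (c d : ℝ) (n : ℕ) :
    (fun t ↦ (c * log t + d) ^ n) =o[atTop] id := by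
  have hlog : (fun t ↦ c * log t + d) =O[atTop] log :=
    (isBigO_refl _ _).const_mul_left c |>.add
      (isLittleO_const_left.2 (.inr (tendsto_norm_atTop_atTop.comp tendsto_log_atTop))).isBigO
  exact (hlog.pow n).trans_isLittleO isLittleO_pow_log_id_atTop

noncomputable def logShift (c d t : ℝ) : ℝ := (c * log t + d) / t

theorem mul_logShift {t : ℝ} (ht : t ≠ 0) (c d : ℝ) : t * logShift c d t = c * log t + d := by
  rw [logShift, mul_div_cancel₀ _ ht]

theorem tendsto_logShift_atTop (c d : ℝ) : Tendsto (logShift c d) atTop (𝓝 0) := by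
  refine (isLittleO_const_mul_log_add_pow_id c d 1).tendsto_div_nhds_zero.congr fun t ↦ ?_
  simp [logShift]

theorem tendsto_mul_one_add_logShift_rpow_remainder (r c d : ℝ) :
    Tendsto (fun t ↦ t * ((1 + logShift c d t) ^ r - 1 - r * logShift c d t)) atTop (𝓝 0) := by
  have hR := (isBigO_one_add_rpow_sub_one_sub_mul r).comp_tendsto (tendsto_logShift_atTop c d)
  have hsq : Tendsto (fun t ↦ t * logShift c d t ^ 2) atTop (𝓝 0) := by
    refine (isLittleO_const_mul_log_add_pow_id c d 2).tendsto_div_nhds_zero.congr' ?_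
    filter_upwards [eventually_ne_atTop 0] with t ht
    simp only [logShift, id]
    field_simp
  exact ((isBigO_refl (fun t : ℝ ↦ t) atTop).mul hR).trans_tendsto hsq

theorem tendsto_one_add_logShift_rpow_mul_exp_remainder (p r c d : ℝ) :
    Tendsto (fun t ↦ (1 + logShift c d t) ^ p
      * exp (-(t * ((1 + logShift c d t) ^ r - 1 - r * logShift c d t)))) atTop (𝓝 1) := by
  have hpow := ((tendsto_logShift_atTop c d).const_add 1).rpow_const (p := p) (.inl (by norm_num))
  have hexp := (continuous_exp.tendsto _).comp
    (tendsto_mul_one_add_logShift_rpow_remainder r c d).neg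
  simpa using hpow.mul hexp

theorem div_self_mul_add_eq_logShift {κ L : ℝ} (hκ : 0 < κ) (hL : 0 < L) {x : ℝ} (hx : x ≠ 0)
    (α c z : ℝ) :
    (x * κ ^ α * L ^ (-α) * (1 + c * log L / L) + x * L ^ (-1 - α) * z) / x
      = κ ^ α * L ^ (-α) * (1 + logShift c (κ ^ (-α) * z) L) := by
  have hκα : κ ^ α * κ ^ (-α) = 1 := by rw [← rpow_add hκ, add_neg_cancel, rpow_zero]
  have hLα : L ^ (-1 - α) = L ^ (-α) * L⁻¹ := by
    rw [sub_eq_neg_add, rpow_add hL, rpow_neg_one, mul_comm]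
  rw [hLα, logShift, div_eq_iff hx]
  linear_combination (-(x * L ^ (-α) * L⁻¹ * z)) * hκα

theorem neg_div_mul_rpow_mul_exp_eq {γ δ κ x L ε z : ℝ} (hγ : 0 < γ) (hκ : 0 < κ) (hL : 0 < L)
    (hxL : exp L = x) (hε : 0 < 1 + ε)
    (hLε : L * ε = γ⁻¹ ^ 2 * (δ + 2 * (1 + γ)) * log L + κ ^ (-(1 / γ)) * z) :
    -(x / (κ * γ) ^ 2) * (κ ^ (1 / γ) * L ^ (-(1 / γ)) * (1 + ε)) ^ (δ + 2 * (1 + γ))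
        * exp (-κ * (κ ^ (1 / γ) * L ^ (-(1 / γ)) * (1 + ε)) ^ (-γ))
      = -(κ ^ ((δ + 2) / γ) / γ ^ 2) * exp (γ * κ ^ (-(1 / γ)) * z)
        * ((1 + ε) ^ (δ + 2 * (1 + γ)) * exp (-(L * ((1 + ε) ^ (-γ) - 1 - -γ * ε)))) := by
  subst hxL
  set p := δ + 2 * (1 + γ)
  have hpow : (κ ^ (1 / γ) * L ^ (-(1 / γ)) * (1 + ε)) ^ p
      = κ ^ (p / γ) * L ^ (-(p / γ)) * (1 + ε) ^ p := by
    rw [mul_rpow (by positivity) hε.le, mul_rpow (by positivity) (by positivity),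
      ← rpow_mul hκ.le, ← rpow_mul hL.le]
    ring_nf
  have hκp : κ ^ (p / γ) = κ ^ ((δ + 2) / γ) * κ ^ 2 := by
    rw [← rpow_natCast, ← rpow_add hκ]
    congr 1
    field_simp
    ring
  have hexp : exp (-L * (1 + ε) ^ (-γ))
      = exp (-(L * ((1 + ε) ^ (-γ) - 1 - -γ * ε))) * exp (-L) * L ^ (p / γ)
        * exp (γ * κ ^ (-(1 / γ)) * z) := by
    rw [rpow_def_of_pos hL, ← exp_add, ← exp_add, ← exp_add]
    congr 1
    have hγLε : γ * (L * ε) = log L * (p / γ) + γ * κ ^ (-(1 / γ)) * z := by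
      rw [hLε]
      field_simp
    linear_combination hγLε
  have hneg : κ * (κ ^ (1 / γ) * L ^ (-(1 / γ)) * (1 + ε)) ^ (-γ) = L * (1 + ε) ^ (-γ) := by
    rw [mul_rpow (by positivity) hε.le, mul_rpow (by positivity) (by positivity),
      ← rpow_mul hκ.le, ← rpow_mul hL.le, show 1 / γ * -γ = -1 by field_simp,
      show -(1 / γ) * -γ = 1 by field_simp, rpow_neg_one, rpow_one]
    field_simp
  have hLL : L ^ (-(p / γ)) * L ^ (p / γ) = 1 := by
    rw [← rpow_add hL, neg_add_cancel, rpow_zero]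
  have hee : exp L * exp (-L) = 1 := by rw [← exp_add, add_neg_cancel, exp_zero]
  rw [neg_mul κ, hneg, ← neg_mul, hpow, hκp, hexp]
  field_simp
  linear_combination (-(exp L * exp (-L))) * hLL - hee

section GumbelType

variable {A B : ℝ}

theorem strictMono_one_sub_exp_neg_mul_exp (hA : 0 < A) (hB : 0 < B) :
    StrictMono fun z ↦ 1 - exp (-A * exp (B * z)) := by
  intro z₁ z₂ h
  simp only [neg_mul, exp_neg]
  gcongr

theorem tendsto_one_sub_exp_neg_mul_exp_atTop (hA : 0 < A) (hB : 0 < B) :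
    Tendsto (fun z ↦ 1 - exp (-A * exp (B * z))) atTop (𝓝 1) := by
  have h := (tendsto_exp_atTop.comp (tendsto_id.const_mul_atTop hB)).const_mul_atTop hA
  simpa using (tendsto_exp_atBot.comp (tendsto_neg_atTop_atBot.comp h)).const_sub 1

theorem tendsto_one_sub_exp_neg_mul_exp_atBot (hB : 0 < B) :
    Tendsto (fun z ↦ 1 - exp (-A * exp (B * z))) atBot (𝓝 0) := by
  have h := (tendsto_exp_atBot.comp (tendsto_id.const_mul_atBot hB)).const_mul (-A)
  simpa using ((continuous_exp.tendsto _).comp h).const_sub 1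

end GumbelType

/-- For `W(x,z) = −(x/(κγ)²)(y/x)^{δ+2(1+γ)} exp{−κ(y/x)^{−γ}}`
with `y = a(x)+b(x)z` and the normings of the Γ-varying spectral model,
`W(x,z) → −{κ^{(δ+2)/γ}/γ²} exp(γκ^{−1/γ}z)` as `x → ∞`, so
`1 − exp{W(x,z)} → G(z) = 1 − exp[−{κ^{(δ+2)/γ}/γ²} exp(γκ^{−1/γ}z)]`,
a nondegenerate distribution function in `z`. -/
theorem gamma_model_conditional_limit
    (γ δ κ : ℝ) (hγ : 0 < γ) (hκ : 0 < κ)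
    (a b : ℝ → ℝ)
    (ha : ∀ x > (1:ℝ), a x = x * κ ^ (1/γ) * (Real.log x) ^ (-(1/γ))
      * (1 + γ⁻¹ ^ 2 * (δ + 2 * (1 + γ)) * Real.log (Real.log x) / Real.log x))
    (hb : ∀ x > (1:ℝ), b x = x * (Real.log x) ^ (-1 - 1/γ))
    (W : ℝ → ℝ → ℝ)
    (hW : ∀ x > (1:ℝ), ∀ z : ℝ,
      W x z = -(x / (κ * γ) ^ 2) * ((a x + b x * z) / x) ^ (δ + 2 * (1 + γ))
        * Real.exp (-κ * ((a x + b x * z) / x) ^ (-γ)))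
    (G : ℝ → ℝ)
    (hG : ∀ z : ℝ, G z = 1 - Real.exp (-(κ ^ ((δ + 2)/γ) / γ ^ 2)
      * Real.exp (γ * κ ^ (-(1/γ)) * z))) :
    (∀ z : ℝ, Tendsto (fun x => W x z) atTop
        (nhds (-(κ ^ ((δ + 2)/γ) / γ ^ 2) * Real.exp (γ * κ ^ (-(1/γ)) * z)))) ∧
    (∀ z : ℝ, Tendsto (fun x => 1 - Real.exp (W x z)) atTop (nhds (G z))) ∧
    StrictMono G ∧
    Tendsto G atTop (nhds 1) ∧ Tendsto G atBot (nhds 0) := by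
  have hW_lim (z : ℝ) : Tendsto (fun x ↦ W x z) atTop
      (𝓝 (-(κ ^ ((δ + 2) / γ) / γ ^ 2) * exp (γ * κ ^ (-(1 / γ)) * z))) := by
    set c := γ⁻¹ ^ 2 * (δ + 2 * (1 + γ))
    set d := κ ^ (-(1 / γ)) * z
    have hε := (tendsto_logShift_atTop c d).comp tendsto_log_atTop
    have h := ((tendsto_one_add_logShift_rpow_mul_exp_remainder (δ + 2 * (1 + γ)) (-γ) c d).comp
      tendsto_log_atTop).const_mul (-(κ ^ ((δ + 2) / γ) / γ ^ 2) * exp (γ * κ ^ (-(1 / γ)) * z))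
    rw [mul_one] at h
    refine h.congr' ?_
    filter_upwards [eventually_gt_atTop 1, hε.eventually (lt_mem_nhds (by norm_num : (-1 : ℝ) < 0))]
      with x hx hεx
    have hL := log_pos hx
    rw [hW x hx, ha x hx, hb x hx, div_self_mul_add_eq_logShift hκ hL (by positivity),
      neg_div_mul_rpow_mul_exp_eq hγ hκ hL (exp_log (zero_lt_one.trans hx)) ?_ ?_]
    · rfl
    · linarith [show -1 < logShift c d (log x) from hεx]
    · exact mul_logShift hL.ne' c d
  have hG_eq : G = fun z ↦ 1 - exp (-(κ ^ ((δ + 2) / γ) / γ ^ 2) * exp (γ * κ ^ (-(1 / γ)) * z)) :=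
    funext hG
  have hA : 0 < κ ^ ((δ + 2) / γ) / γ ^ 2 := by positivity
  have hB : 0 < γ * κ ^ (-(1 / γ)) := by positivity
  refine ⟨hW_lim, fun z ↦ ?_, ?_, ?_, ?_⟩
  · rw [hG z]
    exact ((continuous_exp.tendsto _).comp (hW_lim z)).const_sub 1
  · exact hG_eq ▸ strictMono_one_sub_exp_neg_mul_exp hA hB
  · exact hG_eq ▸ tendsto_one_sub_exp_neg_mul_exp_atTop hA hB
  · exact hG_eq ▸ tendsto_one_sub_exp_neg_mul_exp_atBot hB
end

section
/- Let λ > 0 and define W(x,z) := −c (x y)^{1/2} φ{(1/λ)log(y/x)} / {(1/λ)log(y/x)}², where c = λ exp(−λ²/8), φ is the standard normal density, y = a(x)+b(x)z with a(x) = x exp{−λ(2log x)^{1/2} + λ log log x/(2 log x)^{1/2} + λ²/2} and b(x) = a(x)/(log x)^{1/2}. Then for each fixed z ∈ ℝ, lim_{x→∞} W(x,z) = −(λ/√(8π)) exp(√2 z/λ); consequently 1 − exp{W(x,z)} → G(z) = 1 − exp{−(λ/√(8π)) exp(√2 z/λ)}, a reverted Gumbel distribution function. -/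
/-!
Put `t = log x`. Since `b = a / √t`, the level is `y = a(x) (1 + z/√t)`, so
`u := λ⁻¹ log (y/x) = -√(2t) + r(t)` with `r(t) → λ/2`. Then `√(xy) φ(u) / u²` equals
`(2π)^{-1/2} (t/u²) exp (t + λu/2 - u²/2)`, and in the exponent the divergent terms cancel:
`t + λu/2 - u²/2 = log t + E(t)` with `E(t) → λ²/8 + √2 z/λ`, while `t/u² → 1/2`.
The factor `exp(λ²/8)` cancels the constant `exp(-λ²/8)` in `W`.
-/

open Real Filter Topology

lemma tendsto_sqrt_two_mul_atTop : Tendsto (fun t : ℝ => √(2 * t)) atTop atTop :=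
  tendsto_sqrt_atTop.comp (tendsto_id.const_mul_atTop two_pos)

lemma tendsto_log_div_sqrt_two_mul_atTop :
    Tendsto (fun t : ℝ => log t / √(2 * t)) atTop (𝓝 0) := by
  have h := ((isLittleO_log_rpow_atTop one_half_pos).tendsto_div_nhds_zero).div_const √2
  rw [zero_div] at h
  refine h.congr' ?_
  filter_upwards [eventually_ge_atTop 0] with t ht
  rw [sqrt_mul zero_le_two, sqrt_eq_rpow t, div_div, mul_comm]

lemma tendsto_one_add_div_sqrt_atTop (z : ℝ) :
    Tendsto (fun t : ℝ => 1 + z / √t) atTop (𝓝 1) := by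
  simpa using (tendsto_const_nhds.div_atTop tendsto_sqrt_atTop).const_add (1 : ℝ)

lemma tendsto_log_one_add_div_sqrt_atTop (z : ℝ) :
    Tendsto (fun t : ℝ => log (1 + z / √t)) atTop (𝓝 0) := by
  have h := (continuousAt_log one_ne_zero).tendsto.comp (tendsto_one_add_div_sqrt_atTop z)
  rwa [log_one] at h

lemma tendsto_sqrt_mul_log_one_add_div_sqrt_atTop (z : ℝ) :
    Tendsto (fun t : ℝ => √t * log (1 + z / √t)) atTop (𝓝 z) :=
  (tendsto_mul_log_one_add_div_atTop z).comp tendsto_sqrt_atTop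

lemma one_div_mul_log_exp_log_add_mul_div {x c : ℝ} (hx : 0 < x) (hc : c ≠ 0) (u : ℝ) :
    1 / c * log (exp (log x + c * u) / x) = u := by
  rw [exp_add, exp_log hx, mul_div_cancel_left₀ _ hx.ne', log_exp]
  field_simp

lemma sqrt_mul_exp_log_add {x : ℝ} (hx : 0 < x) (v : ℝ) :
    √(x * exp (log x + v)) = exp (log x + v / 2) := by
  calc √(x * exp (log x + v)) = √(exp (log x) * exp (log x + v)) := by rw [exp_log hx]
    _ = exp (log x + v / 2) := by rw [← exp_add, ← exp_half]; ring_nf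

namespace InvertedSmith

noncomputable def remainder (lam z t : ℝ) : ℝ :=
  log t / √(2 * t) + lam / 2 + log (1 + z / √t) / lam

/-- `λ⁻¹ log (y / x)` as a function of `t = log x`. -/
noncomputable def logRatio (lam z t : ℝ) : ℝ := -√(2 * t) + remainder lam z t

noncomputable def exponent (lam z t : ℝ) : ℝ :=
  lam * remainder lam z t / 2 + √(2 * t) * log (1 + z / √t) / lam - remainder lam z t ^ 2 / 2

/-- `W(x, z)` as a function of `t = log x`. -/
noncomputable def wOfLog (lam z t : ℝ) : ℝ :=
  -(lam * exp (-lam ^ 2 / 8)) / √(2 * π) * (t / logRatio lam z t ^ 2) * exp (exponent lam z t)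

variable (lam z : ℝ)

lemma tendsto_remainder : Tendsto (remainder lam z) atTop (𝓝 (lam / 2)) := by
  have h := (tendsto_log_div_sqrt_two_mul_atTop.add_const (lam / 2)).add
    ((tendsto_log_one_add_div_sqrt_atTop z).div_const lam)
  rwa [zero_add, zero_div, add_zero] at h

lemma tendsto_exponent :
    Tendsto (exponent lam z) atTop (𝓝 (lam ^ 2 / 8 + √2 * z / lam)) := by
  have hlin := ((tendsto_remainder lam z).const_mul lam).div_const 2
  have hsqrt : Tendsto (fun t => √(2 * t) * log (1 + z / √t) / lam) atTop
      (𝓝 (√2 * z / lam)) := by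
    refine ((tendsto_sqrt_mul_log_one_add_div_sqrt_atTop z).const_mul √2).div_const lam
      |>.congr' ?_
    filter_upwards [eventually_ge_atTop 0] with t ht
    rw [sqrt_mul zero_le_two, mul_assoc]
  have hsq := ((tendsto_remainder lam z).pow 2).div_const 2
  have h := (hlin.add hsqrt).sub hsq
  rwa [show lam * (lam / 2) / 2 + √2 * z / lam - (lam / 2) ^ 2 / 2 = lam ^ 2 / 8 + √2 * z / lam
    by ring] at h

lemma tendsto_logRatio_div_sqrt_two_mul :
    Tendsto (fun t => logRatio lam z t / √(2 * t)) atTop (𝓝 (-1)) := by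
  have h := ((tendsto_remainder lam z).div_atTop tendsto_sqrt_two_mul_atTop).const_add (-1)
  rw [add_zero] at h
  refine h.congr' ?_
  filter_upwards [tendsto_sqrt_two_mul_atTop.eventually_gt_atTop 0] with t ht
  rw [logRatio, add_div, neg_div, div_self ht.ne']

lemma tendsto_div_logRatio_sq :
    Tendsto (fun t => t / logRatio lam z t ^ 2) atTop (𝓝 (1 / 2)) := by
  have h := (((tendsto_logRatio_div_sqrt_two_mul lam z).pow 2).inv₀ (by norm_num)).div_const 2
  rw [show ((-1 : ℝ) ^ 2)⁻¹ / 2 = 1 / 2 by norm_num] at h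
  refine h.congr' ?_
  filter_upwards [eventually_ge_atTop 0] with t ht
  rw [div_pow, sq_sqrt (by positivity), inv_div]
  ring

lemma add_half_mul_logRatio_sub_sq {t : ℝ} (ht : 0 < t) :
    t + lam * logRatio lam z t / 2 - logRatio lam z t ^ 2 / 2 = log t + exponent lam z t := by
  have hs : √(2 * t) ^ 2 = 2 * t := sq_sqrt (by positivity)
  have hlog : √(2 * t) * (log t / √(2 * t)) = log t :=
    mul_div_cancel₀ _ (sqrt_pos.2 (by positivity)).ne'
  simp only [logRatio, exponent, remainder]
  linear_combination (-1 / 2 : ℝ) * hs + hlog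

lemma tendsto_wOfLog :
    Tendsto (wOfLog lam z) atTop (𝓝 (-(lam / √(8 * π)) * exp (√2 * z / lam))) := by
  have h := ((tendsto_div_logRatio_sq lam z).const_mul
    (-(lam * exp (-lam ^ 2 / 8)) / √(2 * π))).mul ((continuous_exp.tendsto _).comp
    (tendsto_exponent lam z))
  have hsqrt : √(8 * π) = 2 * √(2 * π) := by
    rw [show (8 : ℝ) * π = 2 ^ 2 * (2 * π) by ring, sqrt_mul (by positivity),
      sqrt_sq zero_le_two]
  have hlim :
      -(lam * exp (-lam ^ 2 / 8)) / √(2 * π) * (1 / 2) * exp (lam ^ 2 / 8 + √2 * z / lam)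
      = -(lam / √(8 * π)) * exp (√2 * z / lam) := by
    have hcancel : exp (-lam ^ 2 / 8) * exp (lam ^ 2 / 8) = 1 := by
      rw [← exp_add, neg_div, neg_add_cancel, exp_zero]
    rw [hsqrt, exp_add]
    linear_combination (-lam * exp (√2 * z / lam) / (2 * √(2 * π))) * hcancel
  rwa [hlim] at h

lemma wOfLog_eq {t : ℝ} (ht : 0 < t) :
    -(lam * exp (-lam ^ 2 / 8)) * exp (t + lam * logRatio lam z t / 2)
        * ((√(2 * π))⁻¹ * exp (-logRatio lam z t ^ 2 / 2)) / logRatio lam z t ^ 2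
      = wOfLog lam z t := by
  have hexp : exp (t + lam * logRatio lam z t / 2) * exp (-logRatio lam z t ^ 2 / 2)
      = t * exp (exponent lam z t) := by
    rw [← exp_add, neg_div, ← sub_eq_add_neg, add_half_mul_logRatio_sub_sq lam z ht, exp_add,
      exp_log ht]
  rw [wOfLog]
  linear_combination
    (-(lam * exp (-lam ^ 2 / 8)) * (√(2 * π))⁻¹ / logRatio lam z t ^ 2) * hexp

lemma level_eq_exp {x : ℝ} (hlam : lam ≠ 0) (hx : 0 < x) (hz : 0 < 1 + z / √(log x)) :
    x * exp (-lam * √(2 * log x) + lam * log (log x) / √(2 * log x) + lam ^ 2 / 2)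
      + x * exp (-lam * √(2 * log x) + lam * log (log x) / √(2 * log x) + lam ^ 2 / 2)
        / √(log x) * z
      = exp (log x + lam * logRatio lam z (log x)) := by
  have hmul : lam * logRatio lam z (log x) = -lam * √(2 * log x)
      + lam * log (log x) / √(2 * log x) + lam ^ 2 / 2 + log (1 + z / √(log x)) := by
    have hcancel : lam * (log (1 + z / √(log x)) / lam) = log (1 + z / √(log x)) :=
      mul_div_cancel₀ _ hlam
    simp only [logRatio, remainder]
    linear_combination hcancel
  rw [hmul, exp_add (log x), exp_add _ (log (1 + z / √(log x))), exp_log hx, exp_log hz]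
  ring

end InvertedSmith

open InvertedSmith

/-- For the inverted Smith model, with
`W(x,z) = −c √(xy) φ{(1/λ)log(y/x)}/{(1/λ)log(y/x)}²`, `c = λ e^{−λ²/8}`,
`y = a(x)+b(x)z`, we have `W(x,z) → −(λ/√(8π)) exp(√2 z/λ)` as `x → ∞`, hence
`1 − exp{W(x,z)} → G(z) = 1 − exp{−(λ/√(8π)) exp(√2 z/λ)}`,
a reverted Gumbel distribution function. -/
theorem inverted_smith_conditional_limit
    (lam : ℝ) (hlam : 0 < lam)
    (φ : ℝ → ℝ)
    (hφ : ∀ u : ℝ, φ u = (Real.sqrt (2 * Real.pi))⁻¹ * Real.exp (-u ^ 2 / 2))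
    (a b : ℝ → ℝ)
    (ha : ∀ x > (1:ℝ), a x = x * Real.exp (-lam * Real.sqrt (2 * Real.log x)
      + lam * Real.log (Real.log x) / Real.sqrt (2 * Real.log x) + lam ^ 2 / 2))
    (hb : ∀ x > (1:ℝ), b x = a x / Real.sqrt (Real.log x))
    (W : ℝ → ℝ → ℝ)
    (hW : ∀ x > (1:ℝ), ∀ z : ℝ,
      W x z = -(lam * Real.exp (-lam ^ 2 / 8)) * Real.sqrt (x * (a x + b x * z))
        * φ ((1/lam) * Real.log ((a x + b x * z) / x))
        / ((1/lam) * Real.log ((a x + b x * z) / x)) ^ 2)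
    (G : ℝ → ℝ)
    (hG : ∀ z : ℝ, G z = 1 - Real.exp (-(lam / Real.sqrt (8 * Real.pi))
      * Real.exp (Real.sqrt 2 * z / lam))) :
    (∀ z : ℝ, Tendsto (fun x => W x z) atTop
        (nhds (-(lam / Real.sqrt (8 * Real.pi)) * Real.exp (Real.sqrt 2 * z / lam)))) ∧
    (∀ z : ℝ, Tendsto (fun x => 1 - Real.exp (W x z)) atTop (nhds (G z))) := by
  have hW_lim : ∀ z : ℝ, Tendsto (fun x => W x z) atTop
      (𝓝 (-(lam / √(8 * π)) * exp (√2 * z / lam))) := by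
    intro z
    refine ((tendsto_wOfLog lam z).comp tendsto_log_atTop).congr' ?_
    have hpos := tendsto_log_atTop.eventually
      ((tendsto_one_add_div_sqrt_atTop z).eventually_const_lt one_pos)
    filter_upwards [eventually_gt_atTop 1, hpos] with x hx hz
    have hx0 : 0 < x := one_pos.trans hx
    rw [Function.comp_apply, hW x hx z, hφ, hb x hx, ha x hx, level_eq_exp lam z hlam.ne' hx0 hz,
      one_div_mul_log_exp_log_add_mul_div hx0 hlam.ne', sqrt_mul_exp_log_add hx0,
      wOfLog_eq lam z (log_pos hx)]
  refine ⟨hW_lim, fun z => ?_⟩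
  rw [hG z]
  exact ((continuous_exp.tendsto _).comp (hW_lim z)).const_sub 1
end
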